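/- arXiv:math/0111074 — 7 statements merged into one kernel-verified Lean document; each statement's English description precedes it below -/
import Mathlib

section
/- Let D : ℝ^m → ℝ^l be a linear map, k a positive integer, and A, B : ℝ^m → ℝ^m linear maps such that rank(D ∘ A^k) < rank(D ∘ B^k). Then the set Λ = {λ ∈ ℝ | rank(D ∘ (A + λB)^k) > rank(D ∘ A^k)} is an open and dense subset of ℝ. -/
/-!
For a matrix `M(t)` with polynomial entries, `d ≤ rank M(t)` holds iff some Gram determinant
`det ((M(t) V)ᵀ (M(t) V))` with a constant `n × d` matrix `V` is nonzero, and each of these is a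
polynomial in `t`. Hence `{t | d ≤ rank M(t)}` is a union of complements of zero sets of
polynomials: it is open, and cofinite (so dense) as soon as it is nonempty.
For `M(t) = D (A + t B)^k` nonemptiness comes from the reversed pencil `D (B + s A)^k`: its rank
exceeds `rank (D A^k)` at `s = 0`, hence at some `s ≠ 0`, and
`D (A + s⁻¹ B)^k = s⁻ᵏ D (B + s A)^k`.
-/

open Module LinearMap Polynomial

namespace Matrix

variable {K m n : Type*} [Field K] [Fintype n]

theorem det_ne_zero_of_rank_eq_card [DecidableEq n] {A : Matrix n n K}
    (h : A.rank = Fintype.card n) : A.det ≠ 0 := by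
  have hrange : LinearMap.range A.mulVecLin = ⊤ :=
    Submodule.eq_top_of_finrank_eq (by rw [← rank, h, finrank_fintype_fun_eq_card])
  rw [← isUnit_iff_ne_zero, ← isUnit_iff_isUnit_det, ← mulVec_surjective_iff_isUnit]
  exact LinearMap.range_eq_top.mp hrange

theorem exists_rank_mul_eq_of_le_rank {N : Matrix m n K} {d : ℕ} (hd : d ≤ N.rank) :
    ∃ V : Matrix n (Fin d) K, (N * V).rank = d := by
  obtain ⟨v, hv⟩ := exists_linearIndependent_of_le_finrank hd
  choose c hc using fun j => (v j).2
  refine ⟨(of c)ᵀ, ?_⟩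
  have hcols : (N * (of c)ᵀ).col = fun j => (v j : m → K) := by
    ext j i
    simp [← hc j, mul_apply, mulVec, dotProduct]
  rw [rank_eq_finrank_span_cols, hcols]
  exact (finrank_span_eq_card (hv.map' _ (Submodule.ker_subtype _))).trans (Fintype.card_fin d)

theorem map_eval_mul_pow_add_X_smul [DecidableEq n] (D : Matrix m n K) (A B : Matrix n n K)
    (k : ℕ) (t : K) :
    (D.map C * (A.map C + (X : K[X]) • B.map C) ^ k).map (eval t) =
      D * (A + t • B) ^ k := by
  have hpencil : (A.map C + (X : K[X]) • B.map C).map (eval t) = A + t • B := by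
    ext; simp [mul_comm _ t]
  have hD : (D.map C).map (eval t) = D := by ext; simp
  rw [← coe_evalRingHom, Matrix.map_mul, ← RingHom.mapMatrix_apply, map_pow,
    RingHom.mapMatrix_apply, coe_evalRingHom, hpencil, hD]

variable [Fintype m]

theorem eval_det_gram {d : ℕ} (M : Matrix m n K[X]) (V : Matrix n (Fin d) K) (t : K) :
    ((M * V.map C)ᵀ * (M * V.map C)).det.eval t =
      ((M.map (eval t) * V)ᵀ * (M.map (eval t) * V)).det := by
  have hV : (V.map C).map (eval t) = V := by ext; simp
  rw [← coe_evalRingHom, RingHom.map_det, RingHom.mapMatrix_apply, Matrix.map_mul, transpose_map,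
    Matrix.map_mul, coe_evalRingHom, hV]

variable [LinearOrder K] [IsStrictOrderedRing K]

theorem le_rank_iff_exists_det_gram_ne_zero (N : Matrix m n K) (d : ℕ) :
    d ≤ N.rank ↔ ∃ V : Matrix n (Fin d) K, ((N * V)ᵀ * (N * V)).det ≠ 0 := by
  constructor
  · intro hd
    obtain ⟨V, hV⟩ := exists_rank_mul_eq_of_le_rank hd
    refine ⟨V, det_ne_zero_of_rank_eq_card ?_⟩
    rw [rank_transpose_mul_self, hV, Fintype.card_fin]
  · rintro ⟨V, hV⟩
    calc d = ((N * V)ᵀ * (N * V)).rank := by rw [rank_of_det_ne_zero hV, Fintype.card_fin]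
      _ = (N * V).rank := rank_transpose_mul_self _
      _ ≤ N.rank := rank_mul_le_left _ _

theorem setOf_le_rank_eval_eq_iUnion (M : Matrix m n K[X]) (d : ℕ) :
    {t : K | d ≤ (M.map (eval t)).rank} = ⋃ V : Matrix n (Fin d) K,
      {t | ((M * V.map C)ᵀ * (M * V.map C)).det.eval t ≠ 0} := by
  ext t
  simp only [Set.mem_ofPred_eq, Set.mem_iUnion, le_rank_iff_exists_det_gram_ne_zero, eval_det_gram]

theorem isOpen_setOf_le_rank_eval [TopologicalSpace K] [IsTopologicalRing K] [T1Space K]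
    (M : Matrix m n K[X]) (d : ℕ) : IsOpen {t : K | d ≤ (M.map (eval t)).rank} := by
  rw [setOf_le_rank_eval_eq_iUnion]
  exact isOpen_iUnion fun V => isOpen_ne_fun (Polynomial.continuous _) continuous_const

theorem finite_setOf_rank_eval_lt (M : Matrix m n K[X]) {d : ℕ} {t₀ : K}
    (ht₀ : d ≤ (M.map (eval t₀)).rank) : {t : K | (M.map (eval t)).rank < d}.Finite := by
  obtain ⟨V, hV⟩ := (le_rank_iff_exists_det_gram_ne_zero _ d).mp ht₀
  rw [← eval_det_gram] at hV
  have hP : ((M * V.map C)ᵀ * (M * V.map C)).det ≠ 0 :=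
    fun h => hV (by rw [h, eval_zero])
  refine (finite_setOfPred_isRoot hP).subset fun t ht => ?_
  by_contra hroot
  refine not_le.mpr ht ((le_rank_iff_exists_det_gram_ne_zero _ d).mpr ⟨V, ?_⟩)
  rwa [← eval_det_gram]

theorem exists_le_rank_mul_pow_add_smul [DecidableEq n] (D : Matrix m n K) (A B : Matrix n n K)
    (k : ℕ) {d : ℕ} (h : d ≤ (D * B ^ k).rank) :
    ∃ t : K, d ≤ (D * (A + t • B) ^ k).rank := by
  have hfin := finite_setOf_rank_eval_lt (D.map C * (B.map C + (X : K[X]) • A.map C) ^ k)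
    (d := d) (t₀ := 0)
    (by rwa [map_eval_mul_pow_add_X_smul, zero_smul, add_zero])
  obtain ⟨s, hs⟩ := (hfin.insert 0).infinite_compl.nonempty
  simp only [Set.mem_compl_iff, Set.mem_insert_iff, not_or, Set.mem_ofPred_eq, not_lt,
    map_eval_mul_pow_add_X_smul] at hs
  obtain ⟨hs₀, hrank⟩ := hs
  have hscale : A + s⁻¹ • B = s⁻¹ • (B + s • A) := by
    rw [smul_add, smul_smul, inv_mul_cancel₀ hs₀, one_smul, add_comm]
  refine ⟨s⁻¹, ?_⟩
  rwa [hscale, _root_.smul_pow, Matrix.mul_smul, rank_smul_of_mem_nonZeroDivisors _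
    (mem_nonZeroDivisors_of_ne_zero (pow_ne_zero _ (inv_ne_zero hs₀)))]

theorem dense_setOf_le_rank_eval (M : Matrix m n ℝ[X]) {d : ℕ} {t₀ : ℝ}
    (ht₀ : d ≤ (M.map (eval t₀)).rank) :
    Dense {t : ℝ | d ≤ (M.map (eval t)).rank} := by
  simpa only [Set.compl_ofPred, not_lt] using
    (M.finite_setOf_rank_eval_lt ht₀).countable.dense_compl ℝ

end Matrix

theorem LinearMap.finrank_range_comp_eq_rank {K m n : Type*} [Field K] [Fintype m] [Fintype n]
    [DecidableEq n] (D : (n → K) →ₗ[K] (m → K)) (L : Module.End K (n → K)) :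
    finrank K (range (D ∘ₗ L)) = (toMatrix' D * toMatrixAlgEquiv' L).rank := by
  rw [show toMatrixAlgEquiv' L = toMatrix' L from rfl, ← toMatrix'_comp, Matrix.rank,
    ← Matrix.toLin'_apply', Matrix.toLin'_toMatrix']

theorem rank_perturbation_open_dense_general (n p k : ℕ)
    (D : (Fin n → ℝ) →ₗ[ℝ] (Fin p → ℝ)) (A B : Module.End ℝ (Fin n → ℝ))
    (h : finrank ℝ (LinearMap.range (D ∘ₗ (A ^ k : Module.End ℝ (Fin n → ℝ)))) <
      finrank ℝ (LinearMap.range (D ∘ₗ (B ^ k : Module.End ℝ (Fin n → ℝ))))) :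
    IsOpen {t : ℝ |
        finrank ℝ (LinearMap.range (D ∘ₗ (((A + t • B) ^ k : Module.End ℝ (Fin n → ℝ))))) >
        finrank ℝ (LinearMap.range (D ∘ₗ (A ^ k : Module.End ℝ (Fin n → ℝ))))} ∧
    Dense {t : ℝ |
        finrank ℝ (LinearMap.range (D ∘ₗ (((A + t • B) ^ k : Module.End ℝ (Fin n → ℝ))))) >
        finrank ℝ (LinearMap.range (D ∘ₗ (A ^ k : Module.End ℝ (Fin n → ℝ))))} := by
  rw [finrank_range_comp_eq_rank, finrank_range_comp_eq_rank, map_pow, map_pow] at h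
  obtain ⟨t₀, ht₀⟩ := Matrix.exists_le_rank_mul_pow_add_smul _ _ (toMatrixAlgEquiv' B) k h
  simp only [gt_iff_lt, finrank_range_comp_eq_rank, map_pow, map_add, map_smul,
    ← Matrix.map_eval_mul_pow_add_X_smul] at ht₀ ⊢
  exact ⟨Matrix.isOpen_setOf_le_rank_eval _ _, Matrix.dense_setOf_le_rank_eval _ ht₀⟩

/-- Let `D : ℝ^n → ℝ^p` be a linear map, `k` a positive integer, and
`A, B : ℝ^n → ℝ^n` linear maps with `rank (D ∘ A^k) < rank (D ∘ B^k)`.  Then the set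
`Λ = {λ : ℝ | rank (D ∘ (A + λB)^k) > rank (D ∘ A^k)}` is open and dense in `ℝ`. -/
theorem rank_perturbation_open_dense (n p k : ℕ) (hk : 0 < k)
    (D : (Fin n → ℝ) →ₗ[ℝ] (Fin p → ℝ)) (A B : Module.End ℝ (Fin n → ℝ))
    (h : finrank ℝ (LinearMap.range (D ∘ₗ (A ^ k : Module.End ℝ (Fin n → ℝ)))) <
      finrank ℝ (LinearMap.range (D ∘ₗ (B ^ k : Module.End ℝ (Fin n → ℝ))))) :
    IsOpen {t : ℝ |
        finrank ℝ (LinearMap.range (D ∘ₗ (((A + t • B) ^ k : Module.End ℝ (Fin n → ℝ))))) >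
        finrank ℝ (LinearMap.range (D ∘ₗ (A ^ k : Module.End ℝ (Fin n → ℝ))))} ∧
    Dense {t : ℝ |
        finrank ℝ (LinearMap.range (D ∘ₗ (((A + t • B) ^ k : Module.End ℝ (Fin n → ℝ))))) >
        finrank ℝ (LinearMap.range (D ∘ₗ (A ^ k : Module.End ℝ (Fin n → ℝ))))} :=
  rank_perturbation_open_dense_general n p k D A B h
end

section
/- Let D : ℝ^m → ℝ^l be a linear map, k a positive integer, and A, B : ℝ^m → ℝ^m linear maps. For all sufficiently small μ ≠ 0, rank(D ∘ (B + μA)^k) ≥ rank(D ∘ B^k). Consequently, if rank(D ∘ A^k) < rank(D ∘ B^k), then there exists λ ∈ ℝ with rank(D ∘ (A + λB)^k) > rank(D ∘ A^k). -/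
open Module LinearMap

private lemma cont_pow_apply (n k : ℕ) (A B : Module.End ℝ (Fin n → ℝ)) (x : Fin n → ℝ) :
    Continuous fun μ : ℝ => ((B + μ • A) ^ k) x := by
  induction k with
  | zero => simpa using continuous_const
  | succ k ih =>
      have : (fun μ : ℝ => ((B + μ • A) ^ (k + 1)) x) =
          fun μ : ℝ => B (((B + μ • A) ^ k) x) + μ • A (((B + μ • A) ^ k) x) := by
        funext μ
        rw [pow_succ']
        simp [Module.End.mul_apply, LinearMap.add_apply, LinearMap.smul_apply]
      rw [this]
      exact (B.continuous_of_finiteDimensional.comp ih).add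
        (continuous_id.smul (A.continuous_of_finiteDimensional.comp ih))

private lemma key (n p k : ℕ)
    (D : (Fin n → ℝ) →ₗ[ℝ] (Fin p → ℝ)) (A B : Module.End ℝ (Fin n → ℝ)) :
    ∃ ε > (0 : ℝ), ∀ μ : ℝ, |μ| < ε →
      finrank ℝ (LinearMap.range (D ∘ₗ (B ^ k : Module.End ℝ (Fin n → ℝ)))) ≤
      finrank ℝ (LinearMap.range (D ∘ₗ (((B + μ • A) ^ k : Module.End ℝ (Fin n → ℝ))))) := by
  set T₀ := D ∘ₗ (B ^ k : Module.End ℝ (Fin n → ℝ)) with hT₀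
  set r := finrank ℝ (LinearMap.range T₀) with hr
  -- choose preimages of a basis of the range
  obtain ⟨b⟩ : Nonempty (Basis (Fin r) ℝ (LinearMap.range T₀)) := ⟨Module.finBasis ℝ _⟩
  have hmem : ∀ j : Fin r, ∃ x, T₀ x = (b j : Fin p → ℝ) := fun j => (b j).2
  choose v hv using hmem
  have hli0 : LinearIndependent ℝ (fun j => T₀ (v j)) := by
    have : LinearIndependent ℝ (fun j : Fin r => ((b j : LinearMap.range T₀) : Fin p → ℝ)) :=
      b.linearIndependent.map' (LinearMap.range T₀).subtype (Submodule.ker_subtype _)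
    simpa [hv] using this
  -- the family as a function of μ
  set F : ℝ → (Fin r → (Fin p → ℝ)) := fun μ j => D (((B + μ • A) ^ k) (v j)) with hF
  have hFc : Continuous F := by
    apply continuous_pi
    intro j
    exact D.continuous_of_finiteDimensional.comp (cont_pow_apply n k A B (v j))
  have hopen : IsOpen (F ⁻¹' {w : Fin r → (Fin p → ℝ) | LinearIndependent ℝ w}) :=
    isOpen_setOf_linearIndependent.preimage hFc
  have h0 : (0 : ℝ) ∈ F ⁻¹' {w | LinearIndependent ℝ w} := by
    have : F 0 = fun j => T₀ (v j) := by
      funext j; simp [hF, hT₀]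
    simpa [Set.mem_preimage, this] using hli0
  obtain ⟨ε, hε, hball⟩ := Metric.isOpen_iff.1 hopen 0 h0
  refine ⟨ε, hε, fun μ hμ => ?_⟩
  have hμmem : μ ∈ F ⁻¹' {w | LinearIndependent ℝ w} := by
    apply hball
    simpa [Metric.mem_ball, Real.dist_eq] using hμ
  have hli : LinearIndependent ℝ (F μ) := hμmem
  -- span of F μ sits inside the range
  have hsub : Submodule.span ℝ (Set.range (F μ)) ≤
      LinearMap.range (D ∘ₗ (((B + μ • A) ^ k : Module.End ℝ (Fin n → ℝ)))) := by
    rw [Submodule.span_le]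
    rintro _ ⟨j, rfl⟩
    exact ⟨v j, rfl⟩
  calc r = Fintype.card (Fin r) := (Fintype.card_fin r).symm
    _ = finrank ℝ (Submodule.span ℝ (Set.range (F μ))) := (finrank_span_eq_card hli).symm
    _ ≤ _ := Submodule.finrank_mono hsub

/-- For linear maps `D : ℝ^n → ℝ^p`, `A, B : ℝ^n → ℝ^n` and a positive
integer `k`: for all sufficiently small `μ ≠ 0` one has
`rank (D ∘ (B + μA)^k) ≥ rank (D ∘ B^k)`; consequently, if
`rank (D ∘ A^k) < rank (D ∘ B^k)` then there is `λ : ℝ` with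
`rank (D ∘ (A + λB)^k) > rank (D ∘ A^k)`. -/
theorem rank_perturbation_exists (n p k : ℕ) (hk : 0 < k)
    (D : (Fin n → ℝ) →ₗ[ℝ] (Fin p → ℝ)) (A B : Module.End ℝ (Fin n → ℝ)) :
    (∃ ε > (0 : ℝ), ∀ μ : ℝ, μ ≠ 0 → |μ| < ε →
      finrank ℝ (LinearMap.range (D ∘ₗ (B ^ k : Module.End ℝ (Fin n → ℝ)))) ≤
      finrank ℝ (LinearMap.range (D ∘ₗ (((B + μ • A) ^ k : Module.End ℝ (Fin n → ℝ)))))) ∧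
    (finrank ℝ (LinearMap.range (D ∘ₗ (A ^ k : Module.End ℝ (Fin n → ℝ)))) <
        finrank ℝ (LinearMap.range (D ∘ₗ (B ^ k : Module.End ℝ (Fin n → ℝ)))) →
      ∃ t : ℝ,
        finrank ℝ (LinearMap.range (D ∘ₗ (((A + t • B) ^ k : Module.End ℝ (Fin n → ℝ))))) >
        finrank ℝ (LinearMap.range (D ∘ₗ (A ^ k : Module.End ℝ (Fin n → ℝ))))) := by
  obtain ⟨ε, hε, hkey⟩ := key n p k D A B
  refine ⟨⟨ε, hε, fun μ _ hμ => hkey μ hμ⟩, fun hlt => ?_⟩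
  set μ := ε / 2 with hμdef
  have hμpos : 0 < μ := by positivity
  have hμlt : |μ| < ε := by
    rw [abs_of_pos hμpos]; linarith
  refine ⟨μ⁻¹, ?_⟩
  have hne : μ⁻¹ ≠ 0 := inv_ne_zero hμpos.ne'
  have hEnd : A + μ⁻¹ • B = μ⁻¹ • (B + μ • A) := by
    rw [smul_add, smul_smul, inv_mul_cancel₀ hμpos.ne', one_smul, add_comm]
  have hpow : ((A + μ⁻¹ • B) ^ k : Module.End ℝ (Fin n → ℝ)) =
      (μ⁻¹) ^ k • ((B + μ • A) ^ k) := by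
    rw [hEnd, smul_pow]
  have hcomp : D ∘ₗ ((A + μ⁻¹ • B) ^ k : Module.End ℝ (Fin n → ℝ)) =
      (μ⁻¹) ^ k • (D ∘ₗ ((B + μ • A) ^ k : Module.End ℝ (Fin n → ℝ))) := by
    rw [hpow]; ext x; simp
  have hrange : LinearMap.range (D ∘ₗ ((A + μ⁻¹ • B) ^ k : Module.End ℝ (Fin n → ℝ))) =
      LinearMap.range (D ∘ₗ ((B + μ • A) ^ k : Module.End ℝ (Fin n → ℝ))) := by
    rw [hcomp]
    exact LinearMap.range_smul _ _ (pow_ne_zero _ hne)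
  rw [hrange]
  exact lt_of_lt_of_le hlt (hkey μ hμlt)
end

section
/- For linear maps A, B : ℝ^m → ℝ^m, D : ℝ^m → ℝ^l, and k a positive integer, the set {λ ∈ ℝ | rank(D ∘ (A + λB)^k) ≤ rank(D ∘ A^k)} is either all of ℝ or a finite set. -/
open Module LinearMap Matrix Polynomial

private lemma rank_toMatrix'_aux {n p : ℕ} (f : (Fin n → ℝ) →ₗ[ℝ] (Fin p → ℝ)) :
    (LinearMap.toMatrix' f).rank = finrank ℝ (LinearMap.range f) := by
  show finrank ℝ (LinearMap.range (LinearMap.toMatrix' f).mulVecLin) = _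
  rw [← Matrix.toLin'_apply', Matrix.toLin'_toMatrix']

private lemma toMatrix'_mulVec_aux {n p : ℕ} (f : (Fin n → ℝ) →ₗ[ℝ] (Fin p → ℝ))
    (x : Fin n → ℝ) : LinearMap.toMatrix' f *ᵥ x = f x := by
  rw [← Matrix.mulVecLin_apply, ← Matrix.toLin'_apply', Matrix.toLin'_toMatrix']

private lemma toMatrix'_pow_aux {n : ℕ} (g : Module.End ℝ (Fin n → ℝ)) (k : ℕ) :
    LinearMap.toMatrix'
        ((g ^ k : Module.End ℝ (Fin n → ℝ)) : (Fin n → ℝ) →ₗ[ℝ] (Fin n → ℝ)) =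
      (LinearMap.toMatrix' (g : (Fin n → ℝ) →ₗ[ℝ] (Fin n → ℝ))) ^ k := by
  induction k with
  | zero =>
      rw [pow_zero, pow_zero]
      exact LinearMap.toMatrix'_id
  | succ k ih =>
      rw [pow_succ, pow_succ, ← ih]
      have : ((g ^ k * g : Module.End ℝ (Fin n → ℝ)) :
          (Fin n → ℝ) →ₗ[ℝ] (Fin n → ℝ)) = (g ^ k : Module.End ℝ (Fin n → ℝ)) ∘ₗ g := rfl
      rw [this, LinearMap.toMatrix'_comp]

/-- For linear maps `A, B : ℝ^n → ℝ^n`, `D : ℝ^n → ℝ^p` and a positive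
integer `k`, the set `{λ : ℝ | rank (D ∘ (A + λB)^k) ≤ rank (D ∘ A^k)}` is either all
of `ℝ` or finite. -/
theorem rank_perturbation_univ_or_finite (n p k : ℕ) (hk : 0 < k)
    (D : (Fin n → ℝ) →ₗ[ℝ] (Fin p → ℝ)) (A B : Module.End ℝ (Fin n → ℝ)) :
    {t : ℝ |
        finrank ℝ (LinearMap.range (D ∘ₗ (((A + t • B) ^ k : Module.End ℝ (Fin n → ℝ))))) ≤
        finrank ℝ (LinearMap.range (D ∘ₗ (A ^ k : Module.End ℝ (Fin n → ℝ))))} = Set.univ ∨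
    Set.Finite {t : ℝ |
        finrank ℝ (LinearMap.range (D ∘ₗ (((A + t • B) ^ k : Module.End ℝ (Fin n → ℝ))))) ≤
        finrank ℝ (LinearMap.range (D ∘ₗ (A ^ k : Module.End ℝ (Fin n → ℝ))))} := by
  classical
  open Polynomial Matrix in
  set r0 := finrank ℝ (LinearMap.range (D ∘ₗ (A ^ k : Module.End ℝ (Fin n → ℝ)))) with hr0
  by_cases h : ∀ t : ℝ,
      finrank ℝ (LinearMap.range (D ∘ₗ (((A + t • B) ^ k : Module.End ℝ (Fin n → ℝ))))) ≤ r0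
  · left
    exact Set.eq_univ_of_forall fun t => h t
  · right
    push_neg at h
    obtain ⟨t0, ht0⟩ := h
    -- notation
    set f : ℝ → ((Fin n → ℝ) →ₗ[ℝ] (Fin p → ℝ)) :=
      fun t => D ∘ₗ (((A + t • B) ^ k : Module.End ℝ (Fin n → ℝ))) with hf
    set MD : Matrix (Fin p) (Fin n) ℝ := LinearMap.toMatrix' D with hMD
    set MA : Matrix (Fin n) (Fin n) ℝ :=
      LinearMap.toMatrix' (A : (Fin n → ℝ) →ₗ[ℝ] Fin n → ℝ) with hMA
    set MB : Matrix (Fin n) (Fin n) ℝ :=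
      LinearMap.toMatrix' (B : (Fin n → ℝ) →ₗ[ℝ] Fin n → ℝ) with hMB
    set P : Matrix (Fin p) (Fin n) ℝ[X] :=
      MD.map C * (MA.map C + (X : ℝ[X]) • MB.map C) ^ k with hP
    -- evaluation of P
    have hPmap : ∀ t : ℝ, P.map (eval t) = MD * (MA + t • MB) ^ k := by
      intro t
      have h1 : (MA.map C + (X : ℝ[X]) • MB.map C).map (eval t) = MA + t • MB := by
        ext i j
        simp only [Matrix.map_apply, Matrix.add_apply, Matrix.smul_apply, smul_eq_mul,
          eval_add, eval_mul, eval_X, eval_C]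
      have h2 : ((MA.map C + (X : ℝ[X]) • MB.map C) ^ k).map (eval t) = (MA + t • MB) ^ k := by
        have h3 := map_pow ((Polynomial.evalRingHom t).mapMatrix (m := Fin n))
          (MA.map C + (X : ℝ[X]) • MB.map C) k
        simp only [RingHom.mapMatrix_apply, coe_evalRingHom] at h3
        rw [h3, h1]
      have hmul := Matrix.map_mul (L := MD.map C)
        (M := (MA.map C + (X : ℝ[X]) • MB.map C) ^ k) (f := Polynomial.evalRingHom t)
      simp only [coe_evalRingHom] at hmul
      rw [hP, hmul, h2]
      congr 1
      ext i j
      simp [Matrix.map_apply]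
    -- matrix of f t
    have hN : ∀ t : ℝ, LinearMap.toMatrix' (f t) = P.map (eval t) := by
      intro t
      rw [hPmap t, hf]
      rw [LinearMap.toMatrix'_comp, toMatrix'_pow_aux]
      congr 2
    -- independent vectors at t0
    have hle : r0 + 1 ≤ finrank ℝ (LinearMap.range (f t0)) := ht0
    obtain ⟨w, hw⟩ := exists_linearIndependent_of_le_finrank (R := ℝ)
      (M := LinearMap.range (f t0)) hle
    have hwv : LinearIndependent ℝ fun i : Fin (r0 + 1) => ((w i : Fin p → ℝ)) :=
      hw.map' (Submodule.subtype _) (Submodule.ker_subtype _)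
    choose v hv using fun i => (w i).2
    set V : Matrix (Fin n) (Fin (r0 + 1)) ℝ[X] := Matrix.of fun i j => C (v j i) with hV
    set V₀ : Matrix (Fin n) (Fin (r0 + 1)) ℝ := Matrix.of fun i j => v j i with hV₀
    have hVmap : ∀ t : ℝ, V.map (eval t) = V₀ := by
      intro t; ext i j; simp [hV, hV₀, Matrix.map_apply]
    set q : ℝ[X] := ((P * V)ᵀ * (P * V)).det with hq
    have hPV : ∀ t : ℝ, (P * V).map (eval t) = P.map (eval t) * V₀ := by
      intro t
      have hmul := Matrix.map_mul (L := P) (M := V) (f := Polynomial.evalRingHom t)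
      simp only [coe_evalRingHom] at hmul
      rw [hmul, hVmap]
    have heval : ∀ t : ℝ, q.eval t =
        ((P.map (eval t) * V₀)ᵀ * (P.map (eval t) * V₀)).det := by
      intro t
      have hdet := RingHom.map_det (Polynomial.evalRingHom t) ((P * V)ᵀ * (P * V))
      have hmul := Matrix.map_mul (L := (P * V)ᵀ) (M := P * V) (f := Polynomial.evalRingHom t)
      simp only [coe_evalRingHom, RingHom.mapMatrix_apply] at hdet hmul
      rw [hq, hdet, hmul, Matrix.transpose_map, hPV t]
    have hV₀c : ∀ c : Fin (r0 + 1) → ℝ, V₀ *ᵥ c = ∑ j, c j • v j := by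
      intro c
      ext i
      simp only [Matrix.mulVec, dotProduct, hV₀, Matrix.of_apply,
        Finset.sum_apply, Pi.smul_apply, smul_eq_mul]
      exact Finset.sum_congr rfl fun j _ => mul_comm _ _
    -- generic point: q(t0) ≠ 0
    have hq0 : q.eval t0 ≠ 0 := by
      intro hzero
      rw [heval t0] at hzero
      set M0 : Matrix (Fin p) (Fin (r0 + 1)) ℝ := P.map (eval t0) * V₀ with hM0
      obtain ⟨c, hc, hMc⟩ := Matrix.exists_mulVec_eq_zero_iff.2 hzero
      have hM0c : M0 *ᵥ c = 0 := by
        have h1 : (M0 *ᵥ c) ⬝ᵥ (M0 *ᵥ c) = 0 := by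
          have h2 : c ⬝ᵥ ((M0ᵀ * M0) *ᵥ c) = 0 := by rw [hMc]; simp
          rw [← Matrix.mulVec_mulVec, Matrix.dotProduct_mulVec,
            Matrix.vecMul_transpose] at h2
          exact h2
        exact dotProduct_self_eq_zero.1 h1
      have hfc : f t0 (V₀ *ᵥ c) = 0 := by
        have : M0 *ᵥ c = f t0 (V₀ *ᵥ c) := by
          rw [hM0, ← Matrix.mulVec_mulVec, ← hN t0, toMatrix'_mulVec_aux]
        rw [← this, hM0c]
      rw [hV₀c c, map_sum] at hfc
      simp only [_root_.map_smul, hv] at hfc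
      exact hc (funext fun j => Fintype.linearIndependent_iff.1 hwv c hfc j)
    have hqne : q ≠ 0 := fun hq' => hq0 (by rw [hq']; simp)
    -- the set is contained in the roots of q
    refine (Polynomial.finite_setOf_isRoot hqne).subset ?_
    intro t ht
    simp only [Set.mem_setOf_eq] at ht ⊢
    by_contra hroot
    have hdet : ((P.map (eval t) * V₀)ᵀ * (P.map (eval t) * V₀)).det ≠ 0 := by
      rw [← heval t]; exact hroot
    have hunit : IsUnit ((P.map (eval t) * V₀)ᵀ * (P.map (eval t) * V₀)) :=
      (Matrix.isUnit_iff_isUnit_det _).2 (isUnit_iff_ne_zero.2 hdet)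
    have h1 : ((P.map (eval t) * V₀)ᵀ * (P.map (eval t) * V₀)).rank = r0 + 1 := by
      rw [Matrix.rank_of_isUnit _ hunit, Fintype.card_fin]
    have h2 : (P.map (eval t) * V₀).rank = r0 + 1 := by
      rw [← Matrix.rank_transpose_mul_self, h1]
    have h3 : r0 + 1 ≤ (P.map (eval t)).rank :=
      h2 ▸ Matrix.rank_mul_le_left _ _
    have h4 : (P.map (eval t)).rank = finrank ℝ (LinearMap.range (f t)) := by
      rw [← hN t, rank_toMatrix'_aux]
    rw [h4] at h3
    have ht' : finrank ℝ (LinearMap.range (f t)) ≤ r0 := ht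
    omega
end

section
/- Let V be a finite-dimensional complex vector space equipped with a representation of sl(2,ℂ) with standard generators X, Y, H satisfying [X,Y] = H, [H,X] = 2X, [H,Y] = -2Y. Then every eigenvalue of the action of H on V is an integer. -/
/-!
Applying `X` to an eigenvector `v` of `H` raises its eigenvalue by `2`. Eigenvectors for distinct
eigenvalues are linearly independent, so in finite dimension some `X ^ (n + 1) v` vanishes, and the
last nonzero `X ^ n v` is a primitive vector of weight `μ + 2 n`. Weights of primitive vectors in a
finite-dimensional representation are natural numbers, hence `μ` is an integer.
-/

open LieModule Module

namespace IsSl2Triple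

variable {R L M : Type*} [CommRing R] [LieRing L] [LieAlgebra R L]
  [AddCommGroup M] [Module R M] [LieRingModule L M] [LieModule R L M]
  [IsDomain R] [CharZero R] [IsNoetherian R M] [IsTorsionFree R M]
  {h e f : L} {m : M} {μ : R}

lemma exists_pow_toEnd_e_apply_eq_zero (t : IsSl2Triple h e f) (hm : ⁅h, m⁆ = μ • m) :
    ∃ n : ℕ, (toEnd R L M e ^ n) m = 0 := by
  by_contra! hne
  have hinj : Function.Injective fun n : ℕ ↦ μ + 2 * n := fun a b hab ↦ by simpa using hab
  have : Finite ℕ := LinearIndependent.finite_of_isNoetherian <|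
    (toEnd R L M h).eigenvectors_linearIndependent' _ hinj (fun n ↦ (toEnd R L M e ^ n) m)
      fun n ↦ ⟨Module.End.mem_eigenspace_iff.mpr (t.lie_h_pow_toEnd_e hm n), hne n⟩
  exact not_finite ℕ

lemma exists_hasPrimitiveVectorWith_pow_toEnd_e_apply (t : IsSl2Triple h e f)
    (hm : ⁅h, m⁆ = μ • m) (hm₀ : m ≠ 0) :
    ∃ n : ℕ, t.HasPrimitiveVectorWith ((toEnd R L M e ^ n) m) (μ + 2 * n) := by
  obtain ⟨n, hn, hn'⟩ := Nat.exists_not_and_succ_of_not_zero_of_exists (by simpa using hm₀)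
    (t.exists_pow_toEnd_e_apply_eq_zero hm)
  exact ⟨n, hn, t.lie_h_pow_toEnd_e hm n, by rwa [lie_e_pow_toEnd_e]⟩

lemma exists_int_of_lie_eq_smul (t : IsSl2Triple h e f) (hm : ⁅h, m⁆ = μ • m) (hm₀ : m ≠ 0) :
    ∃ k : ℤ, μ = k := by
  obtain ⟨n, P⟩ := t.exists_hasPrimitiveVectorWith_pow_toEnd_e_apply hm hm₀
  obtain ⟨k, hk⟩ := P.exists_nat
  exact ⟨k - 2 * n, by push_cast; linear_combination hk⟩

end IsSl2Triple

/-- Let `V` be a finite-dimensional complex vector space carrying a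
representation of `sl(2,ℂ)`, given by operators `X Y H : End ℂ V` satisfying the standard
relations `[X,Y] = H`, `[H,X] = 2X`, `[H,Y] = -2Y`.  Then every eigenvalue of `H` is an
integer. -/
theorem sl2_eigenvalue_integer (V : Type*) [AddCommGroup V] [Module ℂ V]
    [FiniteDimensional ℂ V] (X Y H : Module.End ℂ V)
    (hXY : ⁅X, Y⁆ = H) (hHX : ⁅H, X⁆ = (2 : ℂ) • X) (hHY : ⁅H, Y⁆ = -((2 : ℂ) • Y))
    (μ : ℂ) (hμ : Module.End.HasEigenvalue H μ) :
    ∃ n : ℤ, μ = n := by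
  obtain ⟨v, hv⟩ := hμ.exists_hasEigenvector
  by_cases hH : H = 0
  · subst hH
    exact ⟨0, by simpa [eq_comm, hv.2] using hv.apply_eq_smul⟩
  let : LieRing (Module.End ℂ V) := LieRing.ofAssociativeRing
  have t : IsSl2Triple H X Y :=
    ⟨hH, hXY, by rw [hHX, two_smul, two_smul], by rw [hHY, two_smul, two_smul]⟩
  exact t.exists_int_of_lie_eq_smul hv.apply_eq_smul hv.2
end

section
/- Let (M, ω) be a closed symplectic manifold of dimension 2m. Then the map L^k : H^k_hr(M) → H^{2m-k}_hr(M) induced by k-fold wedging with ω is surjective for 0 ≤ k ≤ m; in particular h_{m-k}(M, ω) ≥ h_{m+k}(M, ω). -/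
open Module LinearMap

/-- Let `(M, ω)` be a closed symplectic `2m`-manifold.  We model the
relevant part of its de Rham complex abstractly (de Rham theory is not available in
Mathlib): `Ωlo` and `Ωhi` stand for the spaces of `(m-k)`- and `(m+k)`-forms, `Ωlo'`, `Ωhi'`
for the spaces one degree below, `dlo`, `dhi` for the exterior differentials into these
degrees, `Hlo`, `Hhi` for the subspaces of symplectically harmonic forms, and
`Lk : α ↦ α ∧ ω^k`.  The hypotheses record Yan's theorem that `Lk` maps `Ωhr^{m-k}`
bijectively onto `Ωhr^{m+k}` (`hmap`, `hinj`) and that `Lk` sends exact forms to exact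
forms (`hd`, since `dω = 0`); `E₁`, `E₂` are the subspaces of exact harmonic forms, so that
`Hlo ⧸ E₁ = H^{m-k}_hr(M)` and `Hhi ⧸ E₂ = H^{m+k}_hr(M)`, which are finite-dimensional as
`M` is closed (`hfin₁`, `hfin₂`).  Conclusion: the induced map
`L^k : H^{m-k}_hr(M) → H^{m+k}_hr(M)` is surjective, and in particular
`h_{m-k} ≥ h_{m+k}`. -/
theorem harmonic_cohomology_lefschetz_surjective (m k : ℕ) (hk : k ≤ m)
    (Ωlo' Ωlo Ωhi' Ωhi : Type)
    [AddCommGroup Ωlo'] [Module ℝ Ωlo'] [AddCommGroup Ωlo] [Module ℝ Ωlo]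
    [AddCommGroup Ωhi'] [Module ℝ Ωhi'] [AddCommGroup Ωhi] [Module ℝ Ωhi]
    (dlo : Ωlo' →ₗ[ℝ] Ωlo) (dhi : Ωhi' →ₗ[ℝ] Ωhi)
    (Hlo : Submodule ℝ Ωlo) (Hhi : Submodule ℝ Ωhi) (Lk : Ωlo →ₗ[ℝ] Ωhi)
    (hmap : Submodule.map Lk Hlo = Hhi)
    (hinj : ∀ x ∈ Hlo, Lk x = 0 → x = 0)
    (hd : ∀ x : Ωlo', Lk (dlo x) ∈ LinearMap.range dhi)
    (E₁ : Submodule ℝ Hlo) (hE₁ : E₁ = (LinearMap.range dlo ⊓ Hlo).comap Hlo.subtype)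
    (E₂ : Submodule ℝ Hhi) (hE₂ : E₂ = (LinearMap.range dhi ⊓ Hhi).comap Hhi.subtype)
    (hfin₁ : FiniteDimensional ℝ (Hlo ⧸ E₁)) (hfin₂ : FiniteDimensional ℝ (Hhi ⧸ E₂)) :
    (∀ y ∈ Hhi, ∃ x ∈ Hlo, ∃ z : Ωhi', y = Lk x + dhi z) ∧
    finrank ℝ (Hhi ⧸ E₂) ≤ finrank ℝ (Hlo ⧸ E₁) := by
  have hmem : ∀ x ∈ Hlo, Lk x ∈ Hhi := fun x hx => hmap ▸ Submodule.mem_map_of_mem hx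
  -- the restricted map Hlo → Hhi
  set g : Hlo →ₗ[ℝ] Hhi := Lk.restrict hmem with hg
  -- composed with the quotient map
  set q : Hlo →ₗ[ℝ] Hhi ⧸ E₂ := E₂.mkQ.comp g with hq
  have hker : E₁ ≤ LinearMap.ker q := by
    intro x hx
    rw [hE₁] at hx
    obtain ⟨⟨w, hw⟩, -⟩ := hx
    obtain ⟨z, hz⟩ := hd w
    simp only [LinearMap.mem_ker, hq, LinearMap.comp_apply, Submodule.mkQ_apply,
      Submodule.Quotient.mk_eq_zero, hE₂]
    refine ⟨⟨z, ?_⟩, (g x).2⟩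
    show dhi z = (g x : Ωhi)
    rw [hz, hw]
    rfl
  set f : (Hlo ⧸ E₁) →ₗ[ℝ] (Hhi ⧸ E₂) := E₁.liftQ q hker with hf
  have hsurj : Function.Surjective f := by
    intro yq
    obtain ⟨y, rfl⟩ := E₂.mkQ_surjective yq
    have hy : (y : Ωhi) ∈ Submodule.map Lk Hlo := hmap.symm ▸ y.2
    obtain ⟨x, hx, hxy⟩ := hy
    refine ⟨E₁.mkQ ⟨x, hx⟩, ?_⟩
    simp only [hf, Submodule.mkQ_apply, Submodule.liftQ_apply, hq, LinearMap.comp_apply]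
    congr 1
    exact Subtype.ext hxy
  constructor
  · intro y hy
    have : y ∈ Submodule.map Lk Hlo := hmap.symm ▸ hy
    obtain ⟨x, hx, hxy⟩ := this
    exact ⟨x, hx, 0, by simp [hxy]⟩
  · calc finrank ℝ (Hhi ⧸ E₂) = finrank ℝ (LinearMap.range f) := by
          rw [LinearMap.range_eq_top.mpr hsurj, finrank_top]
      _ ≤ finrank ℝ (Hlo ⧸ E₁) := f.finrank_range_le
end

section
/- Let (M, ω) be a closed symplectic 6-manifold. Then h₃(M, ω) = h₅(M, ω) + dim ker{L : H³(M) → H⁵(M)}, where L is cup product with the class [ω]. -/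
open Module LinearMap

/-- Let `(M, ω)` be a closed symplectic `6`-manifold.  Then
`h₃(M, ω) = h₅(M, ω) + dim ker {L : H³(M) → H⁵(M)}`, where `L` is cup product with `[ω]`.

Modeling (de Rham cohomology of manifolds is not available in Mathlib): `H1`, `H3`, `H5`
stand for the de Rham cohomology spaces `H¹(M)`, `H³(M)`, `H⁵(M)` (finite-dimensional
since `M` is closed), `L13 : H¹ → H³` and `L35 : H³ → H⁵` are cup product with `[ω]`, and
`Hhr3 ⊆ H³(M)` is the symplectically harmonic part.  The hypotheses record the structural
facts `H³_hr = P³ + L(H¹)` with `P³ = ker{L : H³ → H⁵}` (`hstruct`), `h₃ = dim H³_hr`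
(`hh3`), and `h₅ = dim L²(H¹)` (`hh5`). -/
theorem h3_eq_h5_add_dim_ker (H1 H3 H5 : Type)
    [AddCommGroup H1] [Module ℝ H1] [AddCommGroup H3] [Module ℝ H3]
    [AddCommGroup H5] [Module ℝ H5]
    [FiniteDimensional ℝ H1] [FiniteDimensional ℝ H3] [FiniteDimensional ℝ H5]
    (L13 : H1 →ₗ[ℝ] H3) (L35 : H3 →ₗ[ℝ] H5) (Hhr3 : Submodule ℝ H3) (h3 h5 : ℕ)
    (hstruct : Hhr3 = LinearMap.ker L35 ⊔ LinearMap.range L13)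
    (hh3 : h3 = finrank ℝ Hhr3)
    (hh5 : h5 = finrank ℝ (LinearMap.range (L35 ∘ₗ L13))) :
    h3 = h5 + finrank ℝ (LinearMap.ker L35) := by
  subst hstruct hh3 hh5
  set K := LinearMap.ker L35
  set R := LinearMap.range L13
  -- rank-nullity for L35 restricted to R
  have key : finrank ℝ R =
      finrank ℝ (LinearMap.range (L35 ∘ₗ L13)) + finrank ℝ (K ⊓ R : Submodule ℝ H3) := by
    set f := L35.comp (Submodule.subtype R) with hf
    have h1 : LinearMap.range f = LinearMap.range (L35 ∘ₗ L13) := by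
      rw [hf, LinearMap.range_comp, Submodule.range_subtype, LinearMap.range_comp]
    have h2 : finrank ℝ (LinearMap.ker f) = finrank ℝ (K ⊓ R : Submodule ℝ H3) := by
      have hmap : Submodule.map (Submodule.subtype R) (LinearMap.ker f)
          = K ⊓ R := by
        rw [hf, LinearMap.ker_comp, Submodule.map_comap_subtype, inf_comm]
      rw [← hmap]
      exact (Submodule.equivSubtypeMap _ _).finrank_eq
    have := LinearMap.finrank_range_add_finrank_ker f
    rw [h1, h2] at this
    simpa using this.symm
  have hsup := Submodule.finrank_sup_add_finrank_inf_eq K R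
  omega
end

section
/- Let g be the 6-dimensional nilpotent Lie algebra with structure (0,0,0,12,14,15+23+24) as above, and let ω = A·α₁₃ + B·α₁₅ + C·α₂₃ + D·(α₁₆+α₂₅−α₃₄) + E·(α₂₆−α₄₅) be a closed 2-form in the Chevalley–Eilenberg complex. Then ω³ ≠ 0 if and only if AE² + BDE − CDE − D³ ≠ 0. -/
/-!
Expanding `ω³` and sorting each monomial by anticommutation, every surviving term is a multiple
of the volume form `α₁₂₃₄₅₆`, with total coefficient `6 (A E² + B D E − C D E − D³)`; the volume
form is nonzero.
-/

open ExteriorAlgebra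

/-- The determinant, extended by zero to the other degrees, is a linear form on the exterior
algebra taking the value `det 1 = 1` on the product of the standard basis vectors. -/
theorem ExteriorAlgebra.ιMulti_single_ne_zero (R : Type*) [CommRing R] [Nontrivial R] (n : ℕ) :
    ιMulti R n (fun i : Fin n => Pi.single i (1 : R)) ≠ 0 := by
  intro h
  have hdet := liftAlternating_apply_ιMulti
    (Function.update 0 n (Matrix.detRowAlternating : (Fin n → R) [⋀^Fin n]→ₗ[R] R))
    (fun i : Fin n => Pi.single i (1 : R))
  have hid : (fun i : Fin n => Pi.single i (1 : R)) = (1 : Matrix (Fin n) (Fin n) R) := by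
    funext i j
    simp [Matrix.one_apply, Pi.single_apply, eq_comm]
  rw [h, map_zero, Function.update_self, hid] at hdet
  exact zero_ne_one (hdet.trans Matrix.det_one)

section AnticommutingFamily

variable {R S : Type*} [CommRing R] [Ring S] [Algebra R S]

-- `e 0, …, e 5` play the role of `α₁, …, α₆`.
def closedTwoForm (e : Fin 6 → S) (A B C D E : R) : S :=
  A • (e 0 * e 2) + B • (e 0 * e 4) + C • (e 1 * e 2)
    + D • (e 0 * e 5 + e 1 * e 4 - e 2 * e 3) + E • (e 1 * e 5 - e 3 * e 4)

theorem closedTwoForm_cube {e : Fin 6 → S} (hsq : ∀ i, e i * e i = 0)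
    (hanti : ∀ i j, e i * e j = -(e j * e i)) (A B C D E : R) :
    closedTwoForm e A B C D E * closedTwoForm e A B C D E * closedTwoForm e A B C D E
      = (6 * (A * E ^ 2 + B * D * E - C * D * E - D ^ 3))
          • (e 0 * (e 1 * (e 2 * (e 3 * (e 4 * e 5))))) := by
  have hsq' : ∀ i x, e i * (e i * x) = 0 := fun i x => by
    rw [← mul_assoc, hsq, zero_mul]
  have hswap : ∀ i j, j < i → e i * e j = -(e j * e i) := fun i j _ => hanti i j
  have hswap' : ∀ i j, j < i → ∀ x, e i * (e j * x) = -(e j * (e i * x)) := fun i j _ x => by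
    rw [← mul_assoc, hanti i j, neg_mul, mul_assoc]
  -- the side conditions `j < i` make the rewriting sort each monomial, so it terminates
  simp only [closedTwoForm, smul_add, smul_sub, mul_add, add_mul, mul_sub, sub_mul,
    smul_mul_assoc, mul_smul_comm, mul_assoc, smul_smul]
  simp (disch := decide) only [hswap, hswap', hsq, hsq', mul_neg, mul_zero,
    smul_zero, smul_neg, neg_neg, neg_zero, add_zero, zero_add, sub_zero, zero_sub]
  match_scalars
  ring

end AnticommutingFamily

theorem symplectic_condition_general
    (α : Fin 6 → ExteriorAlgebra ℝ (Fin 6 → ℝ))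
    (hα : ∀ i, α i = ExteriorAlgebra.ι ℝ (Pi.single i (1 : ℝ)))
    (A B C D E : ℝ) (ω : ExteriorAlgebra ℝ (Fin 6 → ℝ))
    (hω : ω = A • (α 0 * α 2) + B • (α 0 * α 4) + C • (α 1 * α 2)
        + D • (α 0 * α 5 + α 1 * α 4 - α 2 * α 3)
        + E • (α 1 * α 5 - α 3 * α 4)) :
    ω * ω * ω ≠ 0 ↔ A * E ^ 2 + B * D * E - C * D * E - D ^ 3 ≠ 0 := by
  have hsq : ∀ i, α i * α i = 0 := fun i => by
    rw [hα]; exact ι_sq_zero _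
  have hanti : ∀ i j, α i * α j = -(α j * α i) := fun i j => by
    rw [hα, hα]; exact eq_neg_of_add_eq_zero_left (ι_add_mul_swap _ _)
  have hvol : α 0 * (α 1 * (α 2 * (α 3 * (α 4 * α 5)))) ≠ 0 := by
    have hprod : ιMulti ℝ 6 (fun i : Fin 6 => Pi.single i (1 : ℝ))
        = α 0 * (α 1 * (α 2 * (α 3 * (α 4 * α 5)))) := by
      rw [ιMulti_apply]
      simp [List.ofFn_succ, hα]
    exact hprod ▸ ιMulti_single_ne_zero ℝ 6
  rw [show ω = closedTwoForm α A B C D E from hω, closedTwoForm_cube hsq hanti,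
    smul_ne_zero_iff, and_iff_left hvol]
  exact ⟨right_ne_zero_of_mul, mul_ne_zero (by norm_num)⟩

/-- In the Chevalley–Eilenberg complex of the 6-dimensional nilpotent Lie
algebra with structure `(0,0,0,12,14,15+23+24)` (dual generators `α₁,…,α₆`, differential as
in `h1`–`h6`, antiderivation property `hleib`), let
`ω = A·α₁₃ + B·α₁₅ + C·α₂₃ + D·(α₁₆+α₂₅−α₃₄) + E·(α₂₆−α₄₅)` be a closed 2-form.  Then
`ω³ ≠ 0` (i.e. `ω` is nondegenerate, hence symplectic) if and only if
`A·E² + B·D·E − C·D·E − D³ ≠ 0`. -/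
theorem symplectic_condition (d : Module.End ℝ (ExteriorAlgebra ℝ (Fin 6 → ℝ)))
    (α : Fin 6 → ExteriorAlgebra ℝ (Fin 6 → ℝ))
    (hα : ∀ i, α i = ExteriorAlgebra.ι ℝ (Pi.single i (1 : ℝ)))
    (hone : d 1 = 0)
    (hleib : ∀ (v : Fin 6 → ℝ) (x : ExteriorAlgebra ℝ (Fin 6 → ℝ)),
      d (ExteriorAlgebra.ι ℝ v * x)
        = d (ExteriorAlgebra.ι ℝ v) * x - ExteriorAlgebra.ι ℝ v * d x)
    (h1 : d (α 0) = 0) (h2 : d (α 1) = 0) (h3 : d (α 2) = 0)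
    (h4 : d (α 3) = α 0 * α 1) (h5 : d (α 4) = α 0 * α 3)
    (h6 : d (α 5) = α 0 * α 4 + α 1 * α 2 + α 1 * α 3)
    (A B C D E : ℝ) (ω : ExteriorAlgebra ℝ (Fin 6 → ℝ))
    (hω : ω = A • (α 0 * α 2) + B • (α 0 * α 4) + C • (α 1 * α 2)
        + D • (α 0 * α 5 + α 1 * α 4 - α 2 * α 3)
        + E • (α 1 * α 5 - α 3 * α 4))
    (hclosed : d ω = 0) :
    ω * ω * ω ≠ 0 ↔ A * E ^ 2 + B * D * E - C * D * E - D ^ 3 ≠ 0 :=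
  symplectic_condition_general α hα A B C D E ω hω
end
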